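/- Let 𝒦 be the continuous graph of the complete graph K on vertices {a0,a1,b0,b1} with ℓ(a0a1)=y, ℓ(b0b1)=z, and ℓ(a_α b_β)=x_{α,β} for α,β∈{0,1}, where the 6-tuple is compliant, i.e., x_{α,β} = d_K(a_α,b_β) for all α,β. For λ∈[0,y] let p(λ) be the point on edge a0a1 at distance λ from a0, and for μ∈[0,z] let q(μ) be the point on edge b0b1 at distance μ from b0. Then d_𝒦(p(λ),q(μ)) = min{ x_{0,0}+λ+μ, x_{0,1}+λ+z−μ, x_{1,0}+y−λ+μ, x_{1,1}+y−λ+z−μ }. -/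
import Mathlib


open SimpleGraph

variable {V : Type*}

/-- Length of a walk in a weighted graph: the sum of the lengths of its edges,
counted with multiplicity. -/
noncomputable def walkLen (ℓ : V → V → ℝ) {G : SimpleGraph V} {a b : V} (w : G.Walk a b) : ℝ :=
  (w.darts.map (fun d => ℓ d.toProd.1 d.toProd.2)).sum

/-- Shortest-path distance in the weighted graph: infimum of walk lengths. -/
noncomputable def gdist (G : SimpleGraph V) (ℓ : V → V → ℝ) (a b : V) : ℝ :=
  sInf {x | ∃ w : G.Walk a b, walkLen ℓ w = x}

/-- Endpoint (`u` or `v`) of the edge carrying a point `(u, v, lam)` of the continuous graph. -/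
def ept (p : V × V × ℝ) : Bool → V := fun i => if i then p.2.1 else p.1

/-- Offset of a point `(u, v, lam)` of the continuous graph to the chosen endpoint of its edge. -/
def off (ℓ : V → V → ℝ) (p : V × V × ℝ) : Bool → ℝ :=
  fun i => if i then ℓ p.1 p.2.1 - p.2.2 else p.2.2

/-- Geodesic distance between two points of the continuous graph `𝒢` of `G`:
a point `(u, v, lam)` lies on edge `uv` at distance `lam` along the edge from `u`.
It is the infimum of the lengths of all connections: leave the first edge through one of
its endpoints, walk in `G`, and enter the second edge through one of its endpoints;
or, if both points lie on the same edge, travel directly along that edge. -/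
noncomputable def pdist (G : SimpleGraph V) (ℓ : V → V → ℝ) (p q : V × V × ℝ) : ℝ :=
  sInf ({x | ∃ (i j : Bool) (w : G.Walk (ept p i) (ept q j)),
        x = off ℓ p i + walkLen ℓ w + off ℓ q j}
    ∪ {x | (p.1, p.2.1) = (q.1, q.2.1) ∧ x = |p.2.2 - q.2.2|}
    ∪ {x | (p.1, p.2.1) = (q.2.1, q.1) ∧ x = |p.2.2 - (ℓ q.1 q.2.1 - q.2.2)|})



lemma walkLen_cons {ℓ : V → V → ℝ} {G : SimpleGraph V} {a b c : V} (h : G.Adj a b)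
    (w : G.Walk b c) : walkLen ℓ (Walk.cons h w) = ℓ a b + walkLen ℓ w := by
  simp [walkLen]

lemma walkLen_nonneg {ℓ : V → V → ℝ} {G : SimpleGraph V}
    (hℓ : ∀ u v, G.Adj u v → 0 ≤ ℓ u v) {a b : V} (w : G.Walk a b) :
    0 ≤ walkLen ℓ w := by
  induction w with
  | nil => simp [walkLen]
  | cons h w ih => rw [walkLen_cons]; exact add_nonneg (hℓ _ _ h) ih

/-- Let `𝒦` be the continuous graph of the complete graph `K` on the four vertices
`a0 = 0, a1 = 1, b0 = 2, b1 = 3` with `ℓ(a0a1) = y`, `ℓ(b0b1) = z` and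
`ℓ(a_α b_β) = x_{αβ}`, where the 6-tuple is compliant, i.e. `x_{αβ} = d_K(a_α,b_β)`.
For `λ ∈ [0,y]` let `p(λ)` be the point on edge `a0a1` at distance `λ` from `a0`, and
for `μ ∈ [0,z]` let `q(μ)` be the point on edge `b0b1` at distance `μ` from `b0`. Then
`d_𝒦(p(λ),q(μ)) = min{x00+λ+μ, x01+λ+z−μ, x10+y−λ+μ, x11+y−λ+z−μ}`. -/
theorem dist_on_K4_edges (y z x00 x01 x10 x11 : ℝ) (hy : 0 < y) (hz : 0 < z)
    (h00 : 0 ≤ x00) (h01 : 0 ≤ x01) (h10 : 0 ≤ x10) (h11 : 0 ≤ x11)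
    (ℓ : Fin 4 → Fin 4 → ℝ) (hsym : ∀ u v, ℓ u v = ℓ v u)
    (hy' : ℓ 0 1 = y) (hz' : ℓ 2 3 = z)
    (hx00 : ℓ 0 2 = x00) (hx01 : ℓ 0 3 = x01) (hx10 : ℓ 1 2 = x10) (hx11 : ℓ 1 3 = x11)
    -- compliance: each `x_{αβ}` is the shortest-path distance `d_K(a_α, b_β)`
    (hc00 : gdist (⊤ : SimpleGraph (Fin 4)) ℓ 0 2 = x00)
    (hc01 : gdist (⊤ : SimpleGraph (Fin 4)) ℓ 0 3 = x01)
    (hc10 : gdist (⊤ : SimpleGraph (Fin 4)) ℓ 1 2 = x10)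
    (hc11 : gdist (⊤ : SimpleGraph (Fin 4)) ℓ 1 3 = x11) :
    ∀ lam ∈ Set.Icc (0:ℝ) y, ∀ mu ∈ Set.Icc (0:ℝ) z,
      pdist (⊤ : SimpleGraph (Fin 4)) ℓ (0, 1, lam) (2, 3, mu)
        = min (min (x00 + lam + mu) (x01 + lam + (z - mu)))
              (min (x10 + (y - lam) + mu) (x11 + (y - lam) + (z - mu))) := by

  intro lam hlam mu hmu
  obtain ⟨hl0, hly⟩ := hlam
  obtain ⟨hm0, hmz⟩ := hmu
  set p : Fin 4 × Fin 4 × ℝ := (0, 1, lam) with hp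
  set q : Fin 4 × Fin 4 × ℝ := (2, 3, mu) with hq
  have hℓnn : ∀ u v : Fin 4, u ≠ v → 0 ≤ ℓ u v := by
    have hy2 : ℓ 1 0 = y := by rw [hsym]; exact hy'
    have hz2 : ℓ 3 2 = z := by rw [hsym]; exact hz'
    have h002 : ℓ 2 0 = x00 := by rw [hsym]; exact hx00
    have h012 : ℓ 3 0 = x01 := by rw [hsym]; exact hx01
    have h102 : ℓ 2 1 = x10 := by rw [hsym]; exact hx10
    have h112 : ℓ 3 1 = x11 := by rw [hsym]; exact hx11
    clear hc00 hc01 hc10 hc11 hp hq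
    clear_value p q
    clear hsym p q
    intro u v huv
    fin_cases u <;> fin_cases v <;> simp_all <;> linarith
  have hadj : ∀ u v, (⊤ : SimpleGraph (Fin 4)).Adj u v → 0 ≤ ℓ u v := by
    intro u v h; exact hℓnn u v h
  -- the two special sets are empty
  set A : Set ℝ := {x | ∃ (i j : Bool) (w : (⊤ : SimpleGraph (Fin 4)).Walk (ept p i) (ept q j)),
        x = off ℓ p i + walkLen ℓ w + off ℓ q j} with hA
  have hpd : pdist (⊤ : SimpleGraph (Fin 4)) ℓ p q = sInf A := by
    unfold pdist
    congr 1
    have e1 : {x : ℝ | (p.1, p.2.1) = (q.1, q.2.1) ∧ x = |p.2.2 - q.2.2|} = ∅ := by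
      ext x; simp [hp, hq]
    have e2 : {x : ℝ | (p.1, p.2.1) = (q.2.1, q.1) ∧ x = |p.2.2 - (ℓ q.1 q.2.1 - q.2.2)|} = ∅ := by
      ext x; simp [hp, hq]
    rw [e1, e2, Set.union_empty, Set.union_empty]
  -- endpoints and offsets
  have hep : ∀ i : Bool, ept p i = if i then 1 else 0 := fun i => rfl
  have heq : ∀ j : Bool, ept q j = if j then 3 else 2 := fun j => rfl
  have hofp : ∀ i : Bool, off ℓ p i = if i then y - lam else lam := by
    intro i; cases i <;> simp [off, hp, hy']
  have hofq : ∀ j : Bool, off ℓ q j = if j then z - mu else mu := by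
    intro j; cases j <;> simp [off, hq, hz']
  have hofp0 : ∀ i : Bool, 0 ≤ off ℓ p i := by
    intro i; rw [hofp]; cases i <;> simp <;> linarith
  have hofq0 : ∀ j : Bool, 0 ≤ off ℓ q j := by
    intro j; rw [hofq]; cases j <;> simp <;> linarith
  set S : Bool → Bool → Set ℝ := fun i j =>
    {x | ∃ w : (⊤ : SimpleGraph (Fin 4)).Walk (ept p i) (ept q j), walkLen ℓ w = x} with hS
  have hgd : ∀ i j, gdist (⊤ : SimpleGraph (Fin 4)) ℓ (ept p i) (ept q j) = sInf (S i j) :=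
    fun i j => rfl
  have hne : ∀ i j, ept p i ≠ ept q j := by
    intro i j; cases i <;> cases j <;> simp [ept, hp, hq]
  have hSne : ∀ i j, (S i j).Nonempty := by
    intro i j
    exact ⟨_, Walk.cons ((SimpleGraph.top_adj _ _).mpr (hne i j)) Walk.nil, rfl⟩
  have hSbd : ∀ i j, BddBelow (S i j) := by
    intro i j
    refine ⟨0, fun x hx => ?_⟩
    obtain ⟨w, rfl⟩ := hx
    exact walkLen_nonneg hadj w
  have hAbd : BddBelow A := by
    refine ⟨0, fun x hx => ?_⟩
    obtain ⟨i, j, w, rfl⟩ := hx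
    have := walkLen_nonneg hadj w
    have := hofp0 i
    have := hofq0 j
    linarith
  have hAne : A.Nonempty := by
    exact ⟨_, false, false, Walk.cons ((SimpleGraph.top_adj _ _).mpr (hne false false)) Walk.nil, rfl⟩
  -- the four gdist values
  have hX : ∀ i j : Bool, gdist (⊤ : SimpleGraph (Fin 4)) ℓ (ept p i) (ept q j)
      = if i then (if j then x11 else x10) else (if j then x01 else x00) := by
    intro i j
    cases i <;> cases j <;> simpa [ept, hp, hq] using (by assumption : _)
  rw [hpd]
  have main_le : ∀ i j : Bool, sInf A ≤ off ℓ p i + sInf (S i j) + off ℓ q j := by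
    intro i j
    apply le_of_forall_pos_le_add
    intro ε hε
    obtain ⟨L, hL, hLlt⟩ := exists_lt_of_csInf_lt (hSne i j) (lt_add_of_pos_right _ hε)
    obtain ⟨w, hw⟩ := hL
    have hmem : off ℓ p i + L + off ℓ q j ∈ A := ⟨i, j, w, by rw [hw]⟩
    have := csInf_le hAbd hmem
    linarith
  apply le_antisymm
  · rw [le_min_iff]
    constructor <;> rw [le_min_iff] <;> constructor
    · have h := main_le false false
      have h2 := hX false false; rw [hgd] at h2; rw [h2, hofp, hofq] at h
      simp at h; linarith
    · have h := main_le false true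
      have h2 := hX false true; rw [hgd] at h2; rw [h2, hofp, hofq] at h
      simp at h; linarith
    · have h := main_le true false
      have h2 := hX true false; rw [hgd] at h2; rw [h2, hofp, hofq] at h
      simp at h; linarith
    · have h := main_le true true
      have h2 := hX true true; rw [hgd] at h2; rw [h2, hofp, hofq] at h
      simp at h; linarith
  · refine le_csInf hAne ?_
    intro x hx
    obtain ⟨i, j, w, rfl⟩ := hx
    have h1 : sInf (S i j) ≤ walkLen ℓ w := csInf_le (hSbd i j) ⟨w, rfl⟩
    have h2 := hX i j
    rw [hgd] at h2
    rw [hofp, hofq]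
    cases i <;> cases j <;> simp only [if_true, Bool.false_eq_true, if_false] at h1 h2 ⊢
    · exact le_trans (min_le_left _ _) (le_trans (min_le_left _ _) (by linarith))
    · exact le_trans (min_le_left _ _) (le_trans (min_le_right _ _) (by linarith))
    · exact le_trans (min_le_right _ _) (le_trans (min_le_left _ _) (by linarith))
    · exact le_trans (min_le_right _ _) (le_trans (min_le_right _ _) (by linarith))
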